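/- arXiv:1507.02132 — 2 statements merged into one kernel-verified Lean document; each statement's English description precedes it below -/
import Mathlib

section
/- For a partition-preferred congestion function under identical pricing, the equilibrium cut-off user does not decrease after partitioning: let K be increasing in Q with K(Q,C) ≥ K(αQ, αC) for all 0 ≤ α < 1; let the single-class equilibrium satisfy θ̃ = (V−p)/K(Q̃,C) with Q̃ = F(θ̃), and the two-class equilibrium (with C₁+C₂ = C, β = C₁/C ≥ 1/2) satisfy K(Q₁,C₁) = K(Q₂,C₂), θ₁ = (V−p)/K(Q₁,C₁), Q₁ = F(θ₁)−F(θ₂), Q₂ = F(θ₂) for an increasing cumulative distribution F. Then θ₁ ≥ θ̃. -/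
/-!
Put `Q = Q₁ + Q₂` and `C = C₁ + C₂`. By the mediant inequality one of the two classes carries at
most its capacity share of the load, say `Qᵢ ≤ (Cᵢ / C) Q`. Monotonicity in the load and the
partition preference then give `K(Qᵢ, Cᵢ) ≤ K((Cᵢ / C) Q, (Cᵢ / C) C) ≤ K(Q, C)`, and since both
classes have equal congestion, the two-class congestion `K(Q₁, C₁)` is at most the single-class
congestion at the load `F(θ₁)`. If `θ₁ < θ̃`, the single-class congestion at `θ̃` would be strictly
larger still, forcing `θ̃ = (V - p) / K(F θ̃, C) < (V - p) / K(Q₁, C₁) = θ₁`.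
-/

section Congestion

variable {K : ℝ → ℝ → ℝ}
  (hKmono : ∀ C Q Q' : ℝ, 0 < C → 0 ≤ Q → Q < Q' → K Q C < K Q' C)
  (hPart : ∀ Q C α : ℝ, 0 ≤ Q → 0 < C → 0 ≤ α → α < 1 → K Q C ≥ K (α * Q) (α * C))
include hKmono

theorem congestion_le_of_le {C Q Q' : ℝ} (hC : 0 < C) (hQ : 0 ≤ Q) (hQQ' : Q ≤ Q') :
    K Q C ≤ K Q' C := by
  rcases hQQ'.eq_or_lt with rfl | hlt
  · rfl
  · exact (hKmono C Q Q' hC hQ hlt).le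

include hPart

theorem congestion_le_of_le_share {q c Q C : ℝ} (hq : 0 ≤ q) (hc : 0 < c) (hcC : c < C)
    (hqQ : q ≤ c / C * Q) : K q c ≤ K Q C := by
  have hC : 0 < C := hc.trans hcC
  have hQ : 0 ≤ Q := nonneg_of_mul_nonneg_right (hq.trans hqQ) (div_pos hc hC)
  calc K q c ≤ K (c / C * Q) c := congestion_le_of_le hKmono hc hq hqQ
    _ = K (c / C * Q) (c / C * C) := by rw [div_mul_cancel₀ c hC.ne']
    _ ≤ K Q C := hPart Q C (c / C) hQ hC (div_pos hc hC).le ((div_lt_one hC).2 hcC)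

theorem congestion_le_of_congestion_eq {Q₁ Q₂ C₁ C₂ : ℝ} (hQ₁ : 0 ≤ Q₁) (hQ₂ : 0 ≤ Q₂)
    (hC₁ : 0 < C₁) (hC₂ : 0 < C₂) (hKeq : K Q₁ C₁ = K Q₂ C₂) :
    K Q₁ C₁ ≤ K (Q₁ + Q₂) (C₁ + C₂) := by
  have hC : 0 < C₁ + C₂ := add_pos hC₁ hC₂
  rcases le_total (Q₁ * C₂) (Q₂ * C₁) with h | h
  · refine congestion_le_of_le_share hKmono hPart hQ₁ hC₁ (by linarith) ?_
    rw [div_mul_eq_mul_div, le_div_iff₀ hC]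
    nlinarith
  · rw [hKeq]
    refine congestion_le_of_le_share hKmono hPart hQ₂ hC₂ (by linarith) ?_
    rw [div_mul_eq_mul_div, le_div_iff₀ hC]
    nlinarith

end Congestion

theorem le_of_eq_div_of_strictMono {G : ℝ → ℝ} (hG : StrictMono G) {a k θ θ' : ℝ} (ha : 0 < a)
    (hk : 0 < k) (hkG : k ≤ G θ') (hθ : θ = a / G θ) (hθ' : θ' = a / k) : θ ≤ θ' := by
  by_contra! h
  have : a / G θ < a / k := div_lt_div_of_pos_left ha hk (hkG.trans_lt (hG h))
  linarith

theorem partition_cutoff_not_decreased_general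
    (K : ℝ → ℝ → ℝ) (F : ℝ → ℝ)
    (hKpos : ∀ Q C : ℝ, 0 ≤ Q → 0 < C → 0 < K Q C)
    (hKmono : ∀ C Q Q' : ℝ, 0 < C → 0 ≤ Q → Q < Q' → K Q C < K Q' C)
    (hPart : ∀ Q C α : ℝ, 0 ≤ Q → 0 < C → 0 ≤ α → α < 1 →
      K Q C ≥ K (α * Q) (α * C))
    (hF : StrictMono F) (hFnn : ∀ θ, 0 ≤ F θ)
    (V p C : ℝ) (hV : p < V)
    (θtilde θ₁ θ₂ C₁ C₂ : ℝ)
    (hC₁ : 0 < C₁) (hC₂ : 0 < C₂) (hCsum : C₁ + C₂ = C)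
    (hθ : θ₂ < θ₁)
    (hsingle : θtilde = (V - p) / K (F θtilde) C)
    (hKeq : K (F θ₁ - F θ₂) C₁ = K (F θ₂) C₂)
    (htwo : θ₁ = (V - p) / K (F θ₁ - F θ₂) C₁) :
    θ₁ ≥ θtilde := by
  subst hCsum
  have hQ₁ : 0 ≤ F θ₁ - F θ₂ := sub_nonneg.2 (hF hθ).le
  have hsplit : K (F θ₁ - F θ₂) C₁ ≤ K (F θ₁) (C₁ + C₂) := by
    simpa using congestion_le_of_congestion_eq hKmono hPart hQ₁ (hFnn θ₂) hC₁ hC₂ hKeq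
  have hG : StrictMono fun θ => K (F θ) (C₁ + C₂) := fun _ _ h =>
    hKmono _ _ _ (add_pos hC₁ hC₂) (hFnn _) (hF h)
  exact le_of_eq_div_of_strictMono hG (sub_pos.2 hV) (hKpos _ _ hQ₁ hC₁) hsplit hsingle htwo

theorem partition_cutoff_not_decreased
    (K : ℝ → ℝ → ℝ) (F : ℝ → ℝ)
    (hKpos : ∀ Q C : ℝ, 0 ≤ Q → 0 < C → 0 < K Q C)
    (hKmono : ∀ C Q Q' : ℝ, 0 < C → 0 ≤ Q → Q < Q' → K Q C < K Q' C)
    (hPart : ∀ Q C α : ℝ, 0 ≤ Q → 0 < C → 0 ≤ α → α < 1 →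
      K Q C ≥ K (α * Q) (α * C))
    (hF : StrictMono F) (hFnn : ∀ θ, 0 ≤ F θ)
    (V p C : ℝ) (hV : p < V) (hp : 0 ≤ p) (hC : 0 < C)
    (θtilde θ₁ θ₂ C₁ C₂ : ℝ)
    (hC₁ : 0 < C₁) (hC₂ : 0 < C₂) (hCsum : C₁ + C₂ = C) (hC₁₂ : C₂ ≤ C₁)
    (hθ : θ₂ < θ₁) (hθ₂ : 0 ≤ θ₂)
    (hsingle : θtilde = (V - p) / K (F θtilde) C)
    (hKeq : K (F θ₁ - F θ₂) C₁ = K (F θ₂) C₂)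
    (htwo : θ₁ = (V - p) / K (F θ₁ - F θ₂) C₁) :
    θ₁ ≥ θtilde :=
  partition_cutoff_not_decreased_general K F hKpos hKmono hPart hF hFnn V p C hV θtilde θ₁ θ₂ C₁ C₂
    hC₁ hC₂ hCsum hθ hsingle hKeq htwo
end

section
/- Key lemma in the proof of viability of partitioning: if the congestion function K is strictly increasing in Q and satisfies K(Q₁,C₁) = K(Q₂,C₂) where C₁ = βC, C₂ = (1−β)C with 1/2 ≤ β < 1, and K(Q,C) ≥ K(αQ, αC) for all 0 ≤ α < 1, then Q₂ ≥ ((1−β)/β)·Q₁, and consequently Q₁ + Q₂ ≥ Q₁/β. -/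
/-! With `α = (1 - β) / β ≤ 1` one has `α • (Q₁, C₁) = (α Q₁, C₂)`, so the partition-preferred
property gives `K(α Q₁, C₂) ≤ K(Q₁, C₁) = K(Q₂, C₂)`, and strict monotonicity in `Q` at the
common capacity `C₂` yields `α Q₁ ≤ Q₂`. Adding `Q₁` gives `Q₁ + Q₂ ≥ (1 + α) Q₁ = Q₁ / β`. -/

theorem scale_le_of_partitionPreferred {K : ℝ → ℝ → ℝ}
    (hPart : ∀ Q C α : ℝ, 0 ≤ Q → 0 < C → 0 ≤ α → α < 1 → K Q C ≥ K (α * Q) (α * C))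
    {Q C α : ℝ} (hQ : 0 ≤ Q) (hC : 0 < C) (hα₀ : 0 ≤ α) (hα₁ : α ≤ 1) :
    K (α * Q) (α * C) ≤ K Q C := by
  rcases hα₁.lt_or_eq with hα₁ | rfl
  · exact hPart Q C α hQ hC hα₀ hα₁
  · simp

theorem one_sub_div_mul_le (K : ℝ → ℝ → ℝ)
    (hKmono : ∀ C Q Q' : ℝ, 0 < C → 0 ≤ Q → Q < Q' → K Q C < K Q' C)
    (hPart : ∀ Q C α : ℝ, 0 ≤ Q → 0 < C → 0 ≤ α → α < 1 → K Q C ≥ K (α * Q) (α * C))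
    {C β Q₁ Q₂ : ℝ} (hC : 0 < C) (hβ1 : 1 / 2 ≤ β) (hβ2 : β < 1)
    (hQ₁ : 0 ≤ Q₁) (hQ₂ : 0 ≤ Q₂)
    (hKeq : K Q₁ (β * C) = K Q₂ ((1 - β) * C)) :
    (1 - β) / β * Q₁ ≤ Q₂ := by
  have hβ : 0 < β := by linarith
  have hC₂ : 0 < (1 - β) * C := mul_pos (by linarith) hC
  have hα₀ : 0 ≤ (1 - β) / β := div_nonneg (by linarith) hβ.le
  have hα₁ : (1 - β) / β ≤ 1 := (div_le_one hβ).2 (by linarith)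
  have hscale : (1 - β) / β * (β * C) = (1 - β) * C := by field_simp
  have hmono : StrictMonoOn (K · ((1 - β) * C)) (Set.Ici 0) :=
    fun _ hQ _ _ hlt ↦ hKmono _ _ _ hC₂ hQ hlt
  have hK : K ((1 - β) / β * Q₁) ((1 - β) * C) ≤ K Q₂ ((1 - β) * C) := by
    rw [← hKeq, ← hscale]
    exact scale_le_of_partitionPreferred hPart hQ₁ (mul_pos hβ hC) hα₀ hα₁
  exact (hmono.le_iff_le (mul_nonneg hα₀ hQ₁) hQ₂).1 hK

theorem partition_usage_bound
    (K : ℝ → ℝ → ℝ)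
    (hKmono : ∀ C Q Q' : ℝ, 0 < C → 0 ≤ Q → Q < Q' → K Q C < K Q' C)
    (hPart : ∀ Q C α : ℝ, 0 ≤ Q → 0 < C → 0 ≤ α → α < 1 →
      K Q C ≥ K (α * Q) (α * C))
    (C β Q₁ Q₂ : ℝ) (hC : 0 < C) (hβ1 : 1 / 2 ≤ β) (hβ2 : β < 1)
    (hQ₁ : 0 ≤ Q₁) (hQ₂ : 0 ≤ Q₂)
    (hKeq : K Q₁ (β * C) = K Q₂ ((1 - β) * C)) :
    Q₂ ≥ ((1 - β) / β) * Q₁ ∧ Q₁ + Q₂ ≥ Q₁ / β := by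
  have hQ₂_ge := one_sub_div_mul_le K hKmono hPart hC hβ1 hβ2 hQ₁ hQ₂ hKeq
  have hsum : Q₁ / β = Q₁ + (1 - β) / β * Q₁ := by
    field_simp [show β ≠ 0 by linarith]
    ring
  exact ⟨hQ₂_ge, by linarith⟩
end
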